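/- Suppose Ω satisfies Condition (*). Call distinct p,q ∈ {1,…,k+2} adjacent if the product ε^p_r·ε^q_r takes the same value for all r ∈ {1,…,k+2} ∖ {p,q}. Then the simple graph on the vertex set {1,…,k+2} whose edges are the adjacent pairs is isomorphic to the cycle graph on k+2 vertices. -/
import Mathlib


open Finset

/-- Determinant of the submatrix of `Ω` obtained by deleting the rows in `s`. -/
noncomputable def minorDet (k : ℕ) (Ω : Matrix (Fin (k + 2)) (Fin k) ℤ)
    (s : Finset (Fin (k + 2))) : ℤ :=
  if h : sᶜ.card = k then (Ω.submatrix (sᶜ.orderEmbOfFin h) id).det else 0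

/-- `Δ_{pq}`: determinant of `Ω` with rows `p` and `q` deleted. -/
noncomputable def Delta (k : ℕ) (Ω : Matrix (Fin (k + 2)) (Fin k) ℤ) (p q : Fin (k + 2)) : ℤ :=
  minorDet k Ω {p, q}

theorem Delta_symm (k : ℕ) (Ω : Matrix (Fin (k + 2)) (Fin k) ℤ) (p q : Fin (k + 2)) :
    Delta k Ω p q = Delta k Ω q p := by
  unfold Delta; rw [Finset.pair_comm]

/-- Condition (*). -/
def CondStar (k : ℕ) (Ω : Matrix (Fin (k + 2)) (Fin k) ℤ) : Prop :=
  (∀ p q : Fin (k + 2), p ≠ q → Delta k Ω p q ≠ 0) ∧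
  (∀ p : Fin (k + 2), (Finset.univ.erase p).gcd (fun q => (Delta k Ω p q).natAbs) = 1)

/-- The sign `ε^p_q`. -/
noncomputable def eps (k : ℕ) (Ω : Matrix (Fin (k + 2)) (Fin k) ℤ) (p q : Fin (k + 2)) : ℤ :=
  (-1) ^ ((p : ℕ) + (q : ℕ)) * Int.sign ((p : ℤ) - (q : ℤ)) * Int.sign (Delta k Ω p q)

/-- `v_p = Σ_i Ω_{pi} x_i`. -/
noncomputable def vP (k : ℕ) (Ω : Matrix (Fin (k + 2)) (Fin k) ℤ) (p : Fin (k + 2)) :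
    MvPolynomial (Fin k) ℤ :=
  ∑ i : Fin k, MvPolynomial.C (Ω p i) * MvPolynomial.X i

/-- The adjacency graph: distinct `p, q` are adjacent iff `ε^p_r · ε^q_r` takes the same
value for all `r ∉ {p, q}`. -/
def adjGraph (k : ℕ) (Ω : Matrix (Fin (k + 2)) (Fin k) ℤ) : SimpleGraph (Fin (k + 2)) :=
  SimpleGraph.fromRel fun p q =>
    ∃ c : ℤ, ∀ r : Fin (k + 2), r ≠ p → r ≠ q → eps k Ω p r * eps k Ω q r = c

/-- The cycle graph on `ℤ/nℤ`: `a` is adjacent to `b` iff `a - b = ±1`. -/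
def cycleZMod (n : ℕ) : SimpleGraph (ZMod n) :=
  SimpleGraph.fromRel fun a b => a - b = 1

namespace AdjCycleAux

variable {k : ℕ} (Ω : Matrix (Fin (k + 2)) (Fin k) ℤ)

/-- The antisymmetrized minor `π_{pq} = (-1)^{p+q} sign(p-q) Δ_{pq}`. -/
noncomputable def piP (p q : Fin (k + 2)) : ℤ :=
  (-1) ^ ((p : ℕ) + (q : ℕ)) * Int.sign ((p : ℤ) - (q : ℤ)) * Delta k Ω p q

lemma piP_self (p : Fin (k + 2)) : piP Ω p p = 0 := by simp [piP]

lemma piP_antisymm (p q : Fin (k + 2)) : piP Ω q p = -piP Ω p q := by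
  unfold piP
  rw [Delta_symm k Ω q p, Nat.add_comm (q : ℕ) (p : ℕ), ← neg_sub ((p : ℤ)) (q : ℤ),
    Int.sign_neg]
  ring

lemma sign_neg_one_pow (n : ℕ) : ((-1 : ℤ) ^ n).sign = (-1 : ℤ) ^ n := by
  rcases Nat.even_or_odd n with h | h
  · rw [h.neg_one_pow]; rfl
  · rw [h.neg_one_pow]; rfl

lemma eps_eq_sign_piP (p q : Fin (k + 2)) : eps k Ω p q = (piP Ω p q).sign := by
  unfold eps piP
  rw [Int.sign_mul, Int.sign_mul, sign_neg_one_pow, Int.sign_sign]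

lemma piP_ne_zero (hΩ : CondStar k Ω) {p q : Fin (k + 2)} (h : p ≠ q) : piP Ω p q ≠ 0 := by
  have h1 : ((p : ℤ) - (q : ℤ)).sign ≠ 0 := by
    rw [Ne, Int.sign_eq_zero_iff_zero, sub_eq_zero]
    exact_mod_cast fun hh => h (Fin.val_injective (by exact_mod_cast hh))
  have h2 := hΩ.1 p q h
  have h3 : ((-1 : ℤ) ^ ((p : ℕ) + (q : ℕ))) ≠ 0 := by
    intro hh; simpa using congrArg Int.natAbs hh
  exact mul_ne_zero (mul_ne_zero h3 h1) h2

/-- The cofactor-style vector deleting row `p`. -/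
noncomputable def wV (p q : Fin (k + 2)) : ℤ :=
  (-1) ^ (q : ℕ) * Int.sign ((p : ℤ) - (q : ℤ)) * Delta k Ω p q

lemma wV_eq (p q : Fin (k + 2)) : wV Ω p q = (-1) ^ (p : ℕ) * piP Ω p q := by
  unfold wV piP
  have h : (-1 : ℤ) ^ (p : ℕ) * (-1) ^ ((p : ℕ) + (q : ℕ)) = (-1) ^ (q : ℕ) := by
    rw [← pow_add, show (p : ℕ) + ((p : ℕ) + (q : ℕ)) = 2 * (p : ℕ) + (q : ℕ) by omega,
      pow_add, pow_mul]
    norm_num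
  rw [← h]; ring

lemma card_compl_pair {p q : Fin (k + 2)} (h : p ≠ q) :
    ({p, q}ᶜ : Finset (Fin (k + 2))).card = k := by
  rw [Finset.card_compl, Finset.card_pair h]
  simp

lemma delta_eq_det {p q : Fin (k + 2)} (hpq : p ≠ q) (f : Fin k → Fin (k + 2))
    (hmono : StrictMono f) (hf : ∀ x, f x ≠ p ∧ f x ≠ q) :
    (Ω.submatrix f id).det = Delta k Ω p q := by
  have hcard := card_compl_pair (k := k) hpq
  unfold Delta minorDet
  rw [dif_pos hcard]
  have hmem : ∀ x, f x ∈ ({p, q}ᶜ : Finset (Fin (k + 2))) := by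
    intro x
    simp only [Finset.mem_compl, Finset.mem_insert, Finset.mem_singleton]
    exact fun hh => hh.elim (hf x).1 (hf x).2
  rw [Finset.orderEmbOfFin_unique hcard hmem hmono]

lemma sign_succAbove (p : Fin (k + 2)) (j : Fin (k + 1)) :
    (-1 : ℤ) ^ ((p.succAbove j : ℕ)) * Int.sign ((p : ℤ) - (p.succAbove j : ℤ))
      = (-1) ^ (j : ℕ) := by
  rcases lt_or_ge (j.castSucc) p with h | h
  · rw [Fin.succAbove_of_castSucc_lt p j h]
    have hj : (j : ℕ) < (p : ℕ) := h
    simp only [Fin.coe_castSucc]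
    rw [Int.sign_eq_one_iff_pos.mpr (by omega : (0:ℤ) < ((p:ℕ):ℤ) - ((j:ℕ):ℤ)), mul_one]
  · rw [Fin.succAbove_of_le_castSucc p j h]
    have hj : (p : ℕ) ≤ (j : ℕ) := h
    simp only [Fin.val_succ]
    rw [Int.sign_eq_neg_one_iff_neg.mpr
      (by push_cast; omega : ((p:ℕ):ℤ) - (((j:ℕ)+1 : ℕ):ℤ) < 0), pow_succ]
    ring

end AdjCycleAux

namespace AdjCycleAux2
open AdjCycleAux
variable {k : ℕ} (Ω : Matrix (Fin (k + 2)) (Fin k) ℤ)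

lemma wV_self (p : Fin (k + 2)) : wV Ω p p = 0 := by simp [wV]

lemma claimA (p : Fin (k + 2)) (i : Fin k) :
    ∑ q, wV Ω p q * Ω q i = 0 := by
  classical
  set B : Matrix (Fin (k + 1)) (Fin (k + 1)) ℤ :=
    Matrix.of fun j l => Fin.cases (Ω (p.succAbove j) i) (fun l' => Ω (p.succAbove j) l') l
    with hB
  have hdet : B.det = 0 := by
    apply Matrix.det_zero_of_column_eq (i := (0 : Fin (k + 1))) (j := i.succ)
    · exact (Fin.succ_ne_zero i).symm
    · intro x; simp [hB]
  have hsub : ∀ j : Fin (k + 1),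
      (B.submatrix j.succAbove Fin.succ).det = Delta k Ω p (p.succAbove j) := by
    intro j
    have h1 : B.submatrix j.succAbove Fin.succ
        = Ω.submatrix (fun a => p.succAbove (j.succAbove a)) id := by
      ext a b; simp [hB]
    rw [h1]
    refine delta_eq_det Ω (Fin.succAbove_ne p j).symm _
      ((Fin.strictMono_succAbove p).comp (Fin.strictMono_succAbove j)) fun a => ?_
    exact ⟨Fin.succAbove_ne p _,
      fun hh => (Fin.succAbove_ne j a) (Fin.succAbove_right_injective hh)⟩
  calc ∑ q, wV Ω p q * Ω q i
      = wV Ω p p * Ω p i + ∑ j : Fin (k + 1), wV Ω p (p.succAbove j) * Ω (p.succAbove j) i :=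
        Fin.sum_univ_succAbove _ p
    _ = ∑ j : Fin (k + 1), (-1) ^ (j : ℕ) * B j 0 * (B.submatrix j.succAbove Fin.succ).det := by
        rw [wV_self, zero_mul, zero_add]
        refine Finset.sum_congr rfl fun j _ => ?_
        rw [hsub j]
        have hB0 : B j 0 = Ω (p.succAbove j) i := rfl
        rw [hB0]
        unfold wV
        rw [← sign_succAbove p j]
        ring
    _ = 0 := by rw [← Matrix.det_succ_column_zero, hdet]

lemma row_zero_of_vecMul {A : Matrix (Fin k) (Fin k) ℤ} (hA : A.det ≠ 0) (v : Fin k → ℤ)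
    (h : ∀ i, ∑ j, v j * A j i = 0) : ∀ j, v j = 0 := by
  have hv : Matrix.vecMul v A = 0 := by
    funext i; simpa [Matrix.vecMul, dotProduct] using h i
  have h2 : Matrix.vecMul (Matrix.vecMul v A) A.adjugate = 0 := by
    rw [hv, Matrix.zero_vecMul]
  rw [Matrix.vecMul_vecMul, Matrix.mul_adjugate] at h2
  intro j
  have h3 := congrFun h2 j
  simp only [Matrix.vecMul, dotProduct, Matrix.smul_apply, Matrix.one_apply,
    smul_eq_mul, mul_ite, mul_one, mul_zero, Finset.sum_ite_eq, Finset.sum_ite_eq', Finset.mem_univ, if_true,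
    Pi.zero_apply] at h3
  rcases mul_eq_zero.mp h3 with h4 | h4
  · exact h4
  · exact absurd h4 hA

lemma piP_eq_wV (p q : Fin (k + 2)) : piP Ω p q = (-1) ^ (p : ℕ) * wV Ω p q := by
  rw [wV_eq, ← mul_assoc, ← pow_add, show (p : ℕ) + (p : ℕ) = 2 * (p : ℕ) by omega, pow_mul]
  norm_num

lemma zero_ne_one' : (0 : Fin (k + 2)) ≠ 1 := by
  intro h
  exact absurd (congrArg Fin.val h) (by simp)

lemma gpD (hΩ : CondStar k Ω) (r s : Fin (k + 2)) :
    piP Ω 0 r * piP Ω 1 s - piP Ω 0 s * piP Ω 1 r = piP Ω 0 1 * piP Ω r s := by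
  classical
  set z : Fin (k + 2) → ℤ := fun q =>
    piP Ω 0 1 * piP Ω r q - piP Ω 0 q * piP Ω r 1 + piP Ω 1 q * piP Ω r 0 with hz
  have hval0 : ((0 : Fin (k + 2)) : ℕ) = 0 := rfl
  have hval1 : ((1 : Fin (k + 2)) : ℕ) = 1 := rfl
  have hq : ∀ q i, z q * Ω q i
      = ((-1) ^ (r : ℕ) * piP Ω 0 1) * (wV Ω r q * Ω q i)
        + (-(piP Ω r 1)) * (wV Ω 0 q * Ω q i)
        + (-(piP Ω r 0)) * (wV Ω 1 q * Ω q i) := by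
    intro q i
    have h1 := piP_eq_wV Ω r q
    have h2 := piP_eq_wV Ω 0 q
    have h3 := piP_eq_wV Ω 1 q
    rw [hval0] at h2
    rw [hval1] at h3
    rw [hz]
    simp only []
    rw [h1, h2, h3]
    ring
  have hzker : ∀ i, ∑ q, z q * Ω q i = 0 := by
    intro i
    calc ∑ q, z q * Ω q i
        = ∑ q, (((-1) ^ (r : ℕ) * piP Ω 0 1) * (wV Ω r q * Ω q i)
          + (-(piP Ω r 1)) * (wV Ω 0 q * Ω q i)
          + (-(piP Ω r 0)) * (wV Ω 1 q * Ω q i)) :=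
          Finset.sum_congr rfl fun q _ => hq q i
      _ = ((-1) ^ (r : ℕ) * piP Ω 0 1) * ∑ q, wV Ω r q * Ω q i
          + (-(piP Ω r 1)) * ∑ q, wV Ω 0 q * Ω q i
          + (-(piP Ω r 0)) * ∑ q, wV Ω 1 q * Ω q i := by
          rw [Finset.sum_add_distrib, Finset.sum_add_distrib, ← Finset.mul_sum,
            ← Finset.mul_sum, ← Finset.mul_sum]
      _ = 0 := by rw [claimA, claimA, claimA]; ring
  have hz0 : z 0 = 0 := by
    rw [hz]
    simp only []
    rw [piP_self, piP_antisymm Ω 0 1]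
    ring
  have hz1 : z 1 = 0 := by
    rw [hz]
    simp only []
    rw [piP_self]
    ring
  have h01 : (0 : Fin (k + 2)) ≠ 1 := zero_ne_one'
  have hc : ({0, 1}ᶜ : Finset (Fin (k + 2))).card = k := card_compl_pair h01
  set e := ({0, 1}ᶜ : Finset (Fin (k + 2))).orderEmbOfFin hc with he
  have hmem : ∀ x, e x ≠ 0 ∧ e x ≠ 1 := by
    intro x
    have hx := Finset.orderEmbOfFin_mem ({0, 1}ᶜ : Finset (Fin (k + 2))) hc x
    simp only [Finset.mem_compl, Finset.mem_insert, Finset.mem_singleton] at hx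
    exact ⟨fun hh => hx (Or.inl hh), fun hh => hx (Or.inr hh)⟩
  have hdetA : (Ω.submatrix (fun j => e j) id).det = Delta k Ω 0 1 :=
    delta_eq_det Ω h01 _ (Finset.orderEmbOfFin _ hc).strictMono hmem
  have himg : Finset.image (fun j => e j) Finset.univ = ({0, 1}ᶜ : Finset (Fin (k + 2))) := by
    apply Finset.coe_injective
    rw [Finset.coe_image, Finset.coe_univ, Set.image_univ]
    exact Finset.range_orderEmbOfFin _ hc
  have hsplit : ∀ i, ∑ j : Fin k, z (e j) * Ω (e j) i = 0 := by
    intro i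
    have h1 := Finset.sum_add_sum_compl ({0, 1} : Finset (Fin (k + 2))) (fun q => z q * Ω q i)
    rw [hzker i] at h1
    have h2 : ∑ q ∈ ({0, 1} : Finset (Fin (k + 2))), z q * Ω q i = 0 := by
      rw [Finset.sum_pair h01, hz0, hz1]; ring
    have h3 : ∑ q ∈ ({0, 1}ᶜ : Finset (Fin (k + 2))), z q * Ω q i
        = ∑ j : Fin k, z (e j) * Ω (e j) i := by
      rw [← himg, Finset.sum_image fun x _ y _ h => (Finset.orderEmbOfFin _ hc).injective h]
    rw [h2, h3, zero_add] at h1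
    exact h1
  have hzall : ∀ q, z q = 0 := by
    intro q
    by_cases hq0 : q = 0
    · rw [hq0]; exact hz0
    by_cases hq1 : q = 1
    · rw [hq1]; exact hz1
    have hqmem : q ∈ ({0, 1}ᶜ : Finset (Fin (k + 2))) := by simp [hq0, hq1]
    rw [← himg] at hqmem
    obtain ⟨j, _, hj⟩ := Finset.mem_image.mp hqmem
    rw [← hj]
    exact row_zero_of_vecMul (A := Ω.submatrix (fun j => e j) id)
      (by rw [hdetA]; exact hΩ.1 0 1 h01) _ (fun i => hsplit i) j
  have hfin := hzall s
  rw [hz] at hfin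
  simp only [] at hfin
  rw [piP_antisymm Ω 1 r, piP_antisymm Ω 0 r] at hfin
  linear_combination -hfin

/-! ### Phase 2: rank-2 geometry -/

noncomputable def DD (p q : Fin (k + 2)) : ℤ :=
  piP Ω 0 p * piP Ω 1 q - piP Ω 0 q * piP Ω 1 p

lemma DD_eq (hΩ : CondStar k Ω) (p q : Fin (k + 2)) :
    DD Ω p q = piP Ω 0 1 * piP Ω p q := gpD Ω hΩ p q

noncomputable def eta (q : Fin (k + 2)) : ℤ :=
  if q = 1 then (piP Ω 0 1).sign else (piP Ω 1 q).sign

lemma sign_mul_self_pos {x : ℤ} (hx : x ≠ 0) : 0 < x.sign * x := by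
  rcases lt_trichotomy x 0 with h | h | h
  · rw [Int.sign_eq_neg_one_iff_neg.mpr h]; linarith
  · exact absurd h hx
  · rw [Int.sign_eq_one_iff_pos.mpr h]; linarith

lemma sign_sq {x : ℤ} (hx : x ≠ 0) : x.sign * x.sign = 1 := by
  rcases lt_trichotomy x 0 with h | h | h
  · rw [Int.sign_eq_neg_one_iff_neg.mpr h]; ring
  · exact absurd h hx
  · rw [Int.sign_eq_one_iff_pos.mpr h]; ring

lemma eta_sq (hΩ : CondStar k Ω) (q : Fin (k + 2)) : eta Ω q * eta Ω q = 1 := by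
  unfold eta
  split_ifs with h
  · exact sign_sq (piP_ne_zero Ω hΩ zero_ne_one')
  · exact sign_sq (piP_ne_zero Ω hΩ fun hh => h hh.symm)

lemma sign_eta (q : Fin (k + 2)) : (eta Ω q).sign = eta Ω q := by
  unfold eta
  split_ifs
  · exact Int.sign_sign
  · exact Int.sign_sign

noncomputable def D' (p q : Fin (k + 2)) : ℤ := eta Ω p * eta Ω q * DD Ω p q

noncomputable def cxv (p : Fin (k + 2)) : ℤ := eta Ω p * piP Ω 0 p
noncomputable def cyv (p : Fin (k + 2)) : ℤ := eta Ω p * piP Ω 1 p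

lemma D'_coord (p q : Fin (k + 2)) :
    D' Ω p q = cxv Ω p * cyv Ω q - cxv Ω q * cyv Ω p := by
  unfold D' DD cxv cyv; ring

lemma upper (hΩ : CondStar k Ω) (p : Fin (k + 2)) :
    0 < cyv Ω p ∨ (cyv Ω p = 0 ∧ 0 < cxv Ω p) := by
  by_cases h : p = 1
  · subst h
    right
    constructor
    · unfold cyv; rw [piP_self]; ring
    · unfold cxv eta; rw [if_pos rfl]
      exact sign_mul_self_pos (piP_ne_zero Ω hΩ zero_ne_one')
  · left
    unfold cyv eta
    rw [if_neg h]
    exact sign_mul_self_pos (piP_ne_zero Ω hΩ fun hh => h hh.symm)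

lemma D'_ne (hΩ : CondStar k Ω) {p q : Fin (k + 2)} (h : p ≠ q) : D' Ω p q ≠ 0 := by
  unfold D'
  have h1 : eta Ω p ≠ 0 := fun hh => by
    have := eta_sq Ω hΩ p; rw [hh] at this; norm_num at this
  have h2 : eta Ω q ≠ 0 := fun hh => by
    have := eta_sq Ω hΩ q; rw [hh] at this; norm_num at this
  have h3 : DD Ω p q ≠ 0 := by
    rw [DD_eq Ω hΩ]
    exact mul_ne_zero (piP_ne_zero Ω hΩ zero_ne_one') (piP_ne_zero Ω hΩ h)
  exact mul_ne_zero (mul_ne_zero h1 h2) h3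

lemma D'_antisymm (p q : Fin (k + 2)) : D' Ω q p = -D' Ω p q := by unfold D' DD; ring

lemma D'_self (p : Fin (k + 2)) : D' Ω p p = 0 := by unfold D' DD; ring

lemma D'_total (hΩ : CondStar k Ω) {p q : Fin (k + 2)} (h : p ≠ q) :
    0 < D' Ω p q ∨ 0 < D' Ω q p := by
  rcases lt_trichotomy (D' Ω p q) 0 with hh | hh | hh
  · right; rw [D'_antisymm]; linarith
  · exact absurd hh (D'_ne Ω hΩ h)
  · left; exact hh

lemma det_trans {a1 a2 b1 b2 c1 c2 : ℤ}
    (ha : 0 < a2 ∨ (a2 = 0 ∧ 0 < a1)) (hb : 0 < b2 ∨ (b2 = 0 ∧ 0 < b1))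
    (hc : 0 < c2 ∨ (c2 = 0 ∧ 0 < c1))
    (hac : a1 * c2 - c1 * a2 ≠ 0)
    (h1 : 0 < a1 * b2 - b1 * a2) (h2 : 0 < b1 * c2 - c1 * b2) :
    0 < a1 * c2 - c1 * a2 := by
  have key : (a1 * c2 - c1 * a2) * b2
      = (a1 * b2 - b1 * a2) * c2 + (b1 * c2 - c1 * b2) * a2 := by ring
  rcases hb with hb2 | ⟨hb2, hb1⟩
  · rcases ha with ha2 | ⟨ha2, ha1⟩
    · have hc2 : 0 ≤ c2 := by rcases hc with h | ⟨h, _⟩ <;> linarith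
      have hrhs : 0 < (a1 * c2 - c1 * a2) * b2 := by nlinarith
      nlinarith
    · rcases hc with hc2 | ⟨hc2, hc1⟩
      · have hrhs : 0 < (a1 * c2 - c1 * a2) * b2 := by nlinarith
        nlinarith
      · exfalso; apply hac; rw [ha2, hc2]; ring
  · have ha2 : 0 ≤ a2 := by rcases ha with h | ⟨h, _⟩ <;> linarith
    rw [hb2] at h1
    have := mul_nonneg hb1.le ha2
    nlinarith

lemma D'_trans (hΩ : CondStar k Ω) {p q r : Fin (k + 2)} (hpq : p ≠ q) (hqr : q ≠ r)
    (hpr : p ≠ r) (h1 : 0 < D' Ω p q) (h2 : 0 < D' Ω q r) : 0 < D' Ω p r := by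
  rw [D'_coord] at h1 h2 ⊢
  exact det_trans (upper Ω hΩ p) (upper Ω hΩ q) (upper Ω hΩ r)
    (by rw [← D'_coord]; exact D'_ne Ω hΩ hpr) h1 h2

noncomputable def kap (p : Fin (k + 2)) : ℕ :=
  (Finset.univ.filter fun s => 0 < D' Ω s p).card

lemma kap_lt (p : Fin (k + 2)) : kap Ω p < k + 2 := by
  unfold kap
  have hsub : (Finset.univ.filter fun s => 0 < D' Ω s p) ⊆ Finset.univ.erase p := by
    intro s hs
    rw [Finset.mem_filter] at hs
    rw [Finset.mem_erase]
    refine ⟨fun hh => ?_, Finset.mem_univ _⟩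
    rw [hh, D'_self] at hs
    exact lt_irrefl 0 hs.2
  have := Finset.card_le_card hsub
  rw [Finset.card_erase_of_mem (Finset.mem_univ _)] at this
  simp only [Finset.card_univ, Fintype.card_fin] at this
  omega

lemma kap_mono (hΩ : CondStar k Ω) {p q : Fin (k + 2)} (h : p ≠ q)
    (hpq : 0 < D' Ω p q) : kap Ω p < kap Ω q := by
  apply Finset.card_lt_card
  rw [Finset.ssubset_def]
  constructor
  · intro s hs
    rw [Finset.mem_filter] at hs ⊢
    refine ⟨Finset.mem_univ _, ?_⟩
    have hsp : s ≠ p := by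
      intro hh; rw [hh, D'_self] at hs; exact lt_irrefl 0 hs.2
    have hsq : s ≠ q := by
      intro hh
      rw [hh] at hs
      have := hs.2
      rw [D'_antisymm] at this
      linarith
    exact D'_trans Ω hΩ hsp h hsq hs.2 hpq
  · intro hsup
    have hp := hsup (Finset.mem_filter.mpr ⟨Finset.mem_univ p, hpq⟩)
    rw [Finset.mem_filter, D'_self] at hp
    exact lt_irrefl 0 hp.2

lemma kap_lt_iff (hΩ : CondStar k Ω) {p q : Fin (k + 2)} (h : p ≠ q) :
    0 < D' Ω p q ↔ kap Ω p < kap Ω q := by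
  constructor
  · exact kap_mono Ω hΩ h
  · intro hlt
    rcases D'_total Ω hΩ h with hh | hh
    · exact hh
    · have := kap_mono Ω hΩ (Ne.symm h) hh
      omega

lemma kap_inj (hΩ : CondStar k Ω) {p q : Fin (k + 2)} (h : kap Ω p = kap Ω q) : p = q := by
  by_contra hpq
  rcases D'_total Ω hΩ hpq with hh | hh
  · have := kap_mono Ω hΩ hpq hh; omega
  · have := kap_mono Ω hΩ (Ne.symm hpq) hh; omega

lemma kap_surj (hΩ : CondStar k Ω) (v : ℕ) (hv : v < k + 2) : ∃ r, kap Ω r = v := by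
  have hinj : Function.Injective (fun p => (⟨kap Ω p, kap_lt Ω p⟩ : Fin (k + 2))) :=
    fun p q hh => kap_inj Ω hΩ (congrArg Fin.val hh)
  obtain ⟨r, hr⟩ := (Finite.injective_iff_bijective.mp hinj).surjective ⟨v, hv⟩
  exact ⟨r, congrArg Fin.val hr⟩

lemma eps_prod (hΩ : CondStar k Ω) (p q r : Fin (k + 2)) :
    eps k Ω p r * eps k Ω q r
      = eta Ω p * eta Ω q * ((D' Ω p r).sign * (D' Ω q r).sign) := by
  have hD : ∀ a b : Fin (k + 2), (D' Ω a b).sign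
      = eta Ω a * eta Ω b * ((piP Ω 0 1).sign * (piP Ω a b).sign) := by
    intro a b
    unfold D'
    rw [Int.sign_mul, Int.sign_mul, sign_eta, sign_eta, DD_eq Ω hΩ, Int.sign_mul]
  rw [eps_eq_sign_piP, eps_eq_sign_piP, hD, hD]
  have e1 := eta_sq Ω hΩ p
  have e2 := eta_sq Ω hΩ q
  have e3 := eta_sq Ω hΩ r
  have s01 := sign_sq (piP_ne_zero Ω hΩ (zero_ne_one' (k := k)))
  have key : ∀ a b c s A B : ℤ, a * a = 1 → b * b = 1 → c * c = 1 → s * s = 1 →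
      A * B = a * b * (a * c * (s * A) * (b * c * (s * B))) := by
    intro a b c s A B h1 h2 h3 h4
    calc A * B = (a * a) * ((b * b) * ((c * c) * ((s * s) * (A * B)))) := by
          rw [h1, h2, h3, h4]; ring
      _ = a * b * (a * c * (s * A) * (b * c * (s * B))) := by ring
  exact key _ _ _ _ _ _ e1 e2 e3 s01

lemma sign_D' (hΩ : CondStar k Ω) {p r : Fin (k + 2)} (h : p ≠ r) :
    (D' Ω p r).sign = if kap Ω p < kap Ω r then 1 else -1 := by
  by_cases hh : kap Ω p < kap Ω r
  · rw [if_pos hh]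
    exact Int.sign_eq_one_iff_pos.mpr ((kap_lt_iff Ω hΩ h).mpr hh)
  · rw [if_neg hh]
    apply Int.sign_eq_neg_one_iff_neg.mpr
    have hne : kap Ω r ≠ kap Ω p := fun e => h (kap_inj Ω hΩ e.symm)
    have hpos : 0 < D' Ω r p := (kap_lt_iff Ω hΩ (Ne.symm h)).mpr (by omega)
    rw [D'_antisymm] at hpos
    linarith

lemma rel_of_consec (hΩ : CondStar k Ω) {p q : Fin (k + 2)}
    (h : kap Ω q = kap Ω p + 1 ∨ kap Ω p = kap Ω q + 1) :
    ∃ c : ℤ, ∀ r : Fin (k + 2), r ≠ p → r ≠ q → eps k Ω p r * eps k Ω q r = c := by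
  refine ⟨eta Ω p * eta Ω q, fun r hrp hrq => ?_⟩
  rw [eps_prod Ω hΩ, sign_D' Ω hΩ (Ne.symm hrp), sign_D' Ω hΩ (Ne.symm hrq)]
  have h1 : kap Ω r ≠ kap Ω p := fun hh => hrp (kap_inj Ω hΩ hh)
  have h2 : kap Ω r ≠ kap Ω q := fun hh => hrq (kap_inj Ω hΩ hh)
  have hiff : (kap Ω p < kap Ω r) ↔ (kap Ω q < kap Ω r) := by omega
  by_cases hc : kap Ω p < kap Ω r
  · rw [if_pos hc, if_pos (hiff.mp hc)]; ring
  · rw [if_neg hc, if_neg fun hh => hc (hiff.mpr hh)]; ring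

lemma rel_of_extreme (hΩ : CondStar k Ω) {p q : Fin (k + 2)}
    (h : (kap Ω p = 0 ∧ kap Ω q = k + 1) ∨ (kap Ω q = 0 ∧ kap Ω p = k + 1)) :
    ∃ c : ℤ, ∀ r : Fin (k + 2), r ≠ p → r ≠ q → eps k Ω p r * eps k Ω q r = c := by
  refine ⟨-(eta Ω p * eta Ω q), fun r hrp hrq => ?_⟩
  rw [eps_prod Ω hΩ, sign_D' Ω hΩ (Ne.symm hrp), sign_D' Ω hΩ (Ne.symm hrq)]
  have h1 : kap Ω r ≠ kap Ω p := fun hh => hrp (kap_inj Ω hΩ hh)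
  have h2 : kap Ω r ≠ kap Ω q := fun hh => hrq (kap_inj Ω hΩ hh)
  have h3 : kap Ω r < k + 2 := kap_lt Ω r
  rcases h with ⟨h4, h5⟩ | ⟨h4, h5⟩
  · rw [if_pos (by omega), if_neg (by omega)]; ring
  · rw [if_neg (by omega), if_pos (by omega)]; ring

lemma not_rel (hΩ : CondStar k Ω) {p q : Fin (k + 2)} (hab : kap Ω p < kap Ω q)
    (hnc : kap Ω q ≠ kap Ω p + 1) (hne : ¬(kap Ω p = 0 ∧ kap Ω q = k + 1)) :
    ¬ ∃ c : ℤ, ∀ r : Fin (k + 2), r ≠ p → r ≠ q → eps k Ω p r * eps k Ω q r = c := by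
  rintro ⟨c, hc⟩
  have hq2 : kap Ω q < k + 2 := kap_lt Ω q
  obtain ⟨r1, hr1⟩ := kap_surj Ω hΩ (kap Ω p + 1) (by omega)
  have hr1p : r1 ≠ p := fun hh => by rw [hh] at hr1; omega
  have hr1q : r1 ≠ q := fun hh => by rw [hh] at hr1; omega
  have e1 : eps k Ω p r1 * eps k Ω q r1 = -(eta Ω p * eta Ω q) := by
    rw [eps_prod Ω hΩ, sign_D' Ω hΩ (Ne.symm hr1p), sign_D' Ω hΩ (Ne.symm hr1q),
      if_pos (by omega), if_neg (by omega)]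
    ring
  have hout : ∃ r2, r2 ≠ p ∧ r2 ≠ q ∧ ((kap Ω p < kap Ω r2) ↔ (kap Ω q < kap Ω r2)) := by
    by_cases h0 : kap Ω p = 0
    · have hk1 : kap Ω q ≠ k + 1 := fun hh => hne ⟨h0, hh⟩
      obtain ⟨r2, hr2⟩ := kap_surj Ω hΩ (k + 1) (by omega)
      exact ⟨r2, fun hh => by rw [hh] at hr2; omega, fun hh => by rw [hh] at hr2; omega,
        by omega⟩
    · obtain ⟨r2, hr2⟩ := kap_surj Ω hΩ 0 (by omega)
      exact ⟨r2, fun hh => by rw [hh] at hr2; omega, fun hh => by rw [hh] at hr2; omega,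
        by omega⟩
  obtain ⟨r2, hr2p, hr2q, hiff⟩ := hout
  have e2 : eps k Ω p r2 * eps k Ω q r2 = eta Ω p * eta Ω q := by
    rw [eps_prod Ω hΩ, sign_D' Ω hΩ (Ne.symm hr2p), sign_D' Ω hΩ (Ne.symm hr2q)]
    by_cases hcc : kap Ω p < kap Ω r2
    · rw [if_pos hcc, if_pos (hiff.mp hcc)]; ring
    · rw [if_neg hcc, if_neg fun hh => hcc (hiff.mpr hh)]; ring
  have hA : -(eta Ω p * eta Ω q) = eta Ω p * eta Ω q := by
    rw [← e1, ← e2, hc r1 hr1p hr1q, hc r2 hr2p hr2q]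
  have hX : (eta Ω p * eta Ω q) * (eta Ω p * eta Ω q) = 1 := by
    calc (eta Ω p * eta Ω q) * (eta Ω p * eta Ω q)
        = (eta Ω p * eta Ω p) * (eta Ω q * eta Ω q) := by ring
      _ = 1 := by rw [eta_sq Ω hΩ, eta_sq Ω hΩ]; ring
  have hX0 : eta Ω p * eta Ω q = 0 := by linarith
  rw [hX0] at hX
  norm_num at hX

lemma adj_char (hΩ : CondStar k Ω) {p q : Fin (k + 2)} :
    (adjGraph k Ω).Adj p q ↔ p ≠ q ∧
      (kap Ω q = kap Ω p + 1 ∨ kap Ω p = kap Ω q + 1 ∨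
       (kap Ω p = 0 ∧ kap Ω q = k + 1) ∨ (kap Ω q = 0 ∧ kap Ω p = k + 1)) := by
  unfold adjGraph
  rw [SimpleGraph.fromRel_adj]
  constructor
  · rintro ⟨hpq, hrel⟩
    refine ⟨hpq, ?_⟩
    by_contra hcon
    push_neg at hcon
    obtain ⟨h1, h2, h3, h4⟩ := hcon
    have hne : kap Ω p ≠ kap Ω q := fun hh => hpq (kap_inj Ω hΩ hh)
    have hrelpq : ∃ c : ℤ, ∀ r : Fin (k + 2), r ≠ p → r ≠ q →
        eps k Ω p r * eps k Ω q r = c := by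
      rcases hrel with h | h
      · exact h
      · obtain ⟨c, hcc⟩ := h
        exact ⟨c, fun r hrp hrq => by rw [mul_comm]; exact hcc r hrq hrp⟩
    have hrelqp : ∃ c : ℤ, ∀ r : Fin (k + 2), r ≠ q → r ≠ p →
        eps k Ω q r * eps k Ω p r = c := by
      obtain ⟨c, hcc⟩ := hrelpq
      exact ⟨c, fun r hrq hrp => by rw [mul_comm]; exact hcc r hrp hrq⟩
    rcases Nat.lt_or_ge (kap Ω p) (kap Ω q) with hlt | hge
    · exact not_rel Ω hΩ hlt (by omega) (fun hh => h3 hh.1 hh.2) hrelpq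
    · exact not_rel Ω hΩ (by omega) (by omega) (fun hh => h4 hh.1 hh.2) hrelqp
  · rintro ⟨hpq, hcond⟩
    refine ⟨hpq, Or.inl ?_⟩
    rcases hcond with h | h | h | h
    · exact rel_of_consec Ω hΩ (Or.inl h)
    · exact rel_of_consec Ω hΩ (Or.inr h)
    · exact rel_of_extreme Ω hΩ (Or.inl h)
    · exact rel_of_extreme Ω hΩ (Or.inr h)

lemma cycle_adj_iff {m : ℕ} (hm : 4 ≤ m) {a b : ℕ} (ha : a < m) (hb : b < m) :
    (cycleZMod m).Adj (a : ZMod m) (b : ZMod m) ↔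
      (b = a + 1 ∨ a = b + 1 ∨ (a = 0 ∧ b = m - 1) ∨ (b = 0 ∧ a = m - 1)) := by
  unfold cycleZMod
  rw [SimpleGraph.fromRel_adj]
  have hcast : ((a : ZMod m) = (b : ZMod m)) ↔ a = b := by
    rw [ZMod.natCast_eq_natCast_iff]
    constructor
    · intro h
      have h2 : a % m = b % m := h
      rwa [Nat.mod_eq_of_lt ha, Nat.mod_eq_of_lt hb] at h2
    · intro h; rw [h]
  have hsub : ∀ x y : ℕ, x < m → y < m →
      (((x : ZMod m) - (y : ZMod m) = 1) ↔ (x = y + 1 ∨ (y = m - 1 ∧ x = 0))) := by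
    intro x y hx hy
    rw [sub_eq_iff_eq_add]
    have h1 : (1 : ZMod m) + (y : ZMod m) = ((y + 1 : ℕ) : ZMod m) := by push_cast; ring
    rw [h1, ZMod.natCast_eq_natCast_iff]
    constructor
    · intro h
      have h2 : x % m = (y + 1) % m := h
      rw [Nat.mod_eq_of_lt hx] at h2
      rcases Nat.lt_or_ge (y + 1) m with hlt | hge
      · left; rw [Nat.mod_eq_of_lt hlt] at h2; omega
      · right
        have hym : y + 1 = m := by omega
        rw [hym, Nat.mod_self] at h2
        omega
    · rintro (h | ⟨h1', h2'⟩)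
      · show x % m = (y + 1) % m
        rw [h]
      · show x % m = (y + 1) % m
        have hym : y + 1 = m := by omega
        rw [hym, Nat.mod_self, h2']
        simp
  rw [hsub a b ha hb, hsub b a hb ha]
  rw [Ne, hcast]
  omega

end AdjCycleAux2


open AdjCycleAux AdjCycleAux2

/-- The adjacency graph is isomorphic to the cycle graph on `k + 2` vertices. -/
theorem adjGraph_iso_cycle (k : ℕ) (hk : 2 ≤ k) (Ω : Matrix (Fin (k + 2)) (Fin k) ℤ)
    (hΩ : CondStar k Ω) :
    Nonempty (adjGraph k Ω ≃g cycleZMod (k + 2)) := by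
  classical
  have hm : 4 ≤ k + 2 := by omega
  have hinj : Function.Injective (fun p => (⟨kap Ω p, kap_lt Ω p⟩ : Fin (k + 2))) :=
    fun p q hh => kap_inj Ω hΩ (congrArg Fin.val hh)
  have hbij := Finite.injective_iff_bijective.mp hinj
  set E := Equiv.ofBijective _ hbij with hE
  refine ⟨⟨Equiv.mk (fun p => ((kap Ω p : ℕ) : ZMod (k + 2)))
    (fun z => E.symm ⟨z.val, z.val_lt⟩) ?_ ?_, ?_⟩⟩
  · intro p
    have hval : ((kap Ω p : ℕ) : ZMod (k + 2)).val = kap Ω p :=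
      ZMod.val_natCast_of_lt (kap_lt Ω p)
    have h2 : (⟨((kap Ω p : ℕ) : ZMod (k + 2)).val,
        ZMod.val_lt ((kap Ω p : ℕ) : ZMod (k + 2))⟩ : Fin (k + 2)) = E p :=
      Fin.ext hval
    show E.symm ⟨((kap Ω p : ℕ) : ZMod (k + 2)).val, _⟩ = p
    rw [h2, Equiv.symm_apply_apply]
  · intro z
    show ((kap Ω (E.symm ⟨z.val, z.val_lt⟩) : ℕ) : ZMod (k + 2)) = z
    have h1 : E (E.symm ⟨z.val, z.val_lt⟩) = ⟨z.val, z.val_lt⟩ :=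
      Equiv.apply_symm_apply _ _
    have h2 : kap Ω (E.symm ⟨z.val, z.val_lt⟩) = z.val := congrArg Fin.val h1
    rw [h2]
    exact ZMod.natCast_rightInverse z
  · intro p q
    show (cycleZMod (k + 2)).Adj ((kap Ω p : ℕ) : ZMod (k + 2))
      ((kap Ω q : ℕ) : ZMod (k + 2)) ↔ (adjGraph k Ω).Adj p q
    rw [cycle_adj_iff hm (kap_lt Ω p) (kap_lt Ω q), adj_char Ω hΩ]
    constructor
    · intro h
      have hne : kap Ω p ≠ kap Ω q := by omega
      exact ⟨fun hh => hne (by rw [hh]), by omega⟩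
    · rintro ⟨hpq, h⟩
      omega
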